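/- arXiv:2103.10993 — 4 statements merged into one kernel-verified Lean document; each statement's English description precedes it below -/
import Mathlib

section
/- Fix m : I → ℕ and, for each i ∈ I, nonzero polynomials p_i, q_i ∈ ℂ[u]. Then the set of I-tuples (g_i)_{i∈I} of monic polynomials in ℂ[u] with deg g_i = m(i) which satisfy, for every i ∈ I, the divisibility g_i(u)·q_i(u+d_i) ∣ p_i(u+d_i)·∏_{j : c_{ji}<0} ∏_{t=1}^{−c_{ji}} g_j(u + d_i − d_{ij} − t·d_j) in ℂ[u], is finite. (This is the polynomial-theoretic core of the theorem that a truncated shifted Yangian admits only finitely many irreducible representations in category O^{sh}.) -/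
open Polynomial
open scoped Pointwise

/-! A root `x` of `g i` is, by the divisibility, either `r - d i` for a root `r` of `p i`, or
`y - a` for a root `y` of some `g j` and a shift `a` from a finite set independent of `g`.
Positive definiteness, evaluated at `e i + e j`, gives `0 < d i + d j + d i c i j`, and this makes
the weight `2 Re x + d i` of the root strictly increase from `x` to `y`. A solution has at most
`∑ m i` roots, so every root arises from a root of some `p i` by subtracting at most `∑ m i`
shifts. Hence all roots lie in one finite set, and monic polynomials over `ℂ` are determined by
their roots. -/

theorem Matrix.PosDef.apply_pair_sum_pos {n R : Type*} [CommRing R] [LinearOrder R]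
    [IsStrictOrderedRing R] [StarRing R] [TrivialStar R] {M : Matrix n n R} (hM : M.PosDef)
    {i j : n} (hij : i ≠ j) : 0 < M i i + M i j + M j i + M j j := by
  classical
  have hx : Finsupp.single i (1 : R) + Finsupp.single j 1 ≠ 0 := by
    intro h
    simpa [hij] using DFunLike.congr_fun h i
  have := hM.2 hx
  simp only [star_trivial, mul_zero, implies_true, mul_add, Finsupp.sum_add_index',
    Finsupp.sum_single_index, mul_one, Finsupp.sum_add, zero_mul, add_mul, one_mul] at this
  linarith

theorem Finset.mem_of_weight_ascent {α β : Type*} [LinearOrder β] {Q : Finset α} (w : α → β)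
    {T : ℕ → Set α} (hT : Monotone T)
    (h : ∀ q ∈ Q, q ∈ T 0 ∨ ∃ q' ∈ Q, w q < w q' ∧ ∀ k, q' ∈ T k → q ∈ T (k + 1))
    {q : α} (hq : q ∈ Q) : q ∈ T Q.card := by
  classical
  -- induction on the number of elements of `Q` of larger weight than `q`
  suffices ∀ n, ∀ q ∈ Q, (Q.filter (w q < w ·)).card ≤ n → q ∈ T n from
    this _ q hq (card_filter_le _ _)
  intro n
  induction n with
  | zero =>
    intro q hq hn
    rcases h q hq with h0 | ⟨q', hq', hlt, -⟩
    · exact h0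
    · exact absurd hn (by simpa using ⟨q', hq', hlt⟩)
  | succ n ih =>
    intro q hq hn
    rcases h q hq with h0 | ⟨q', hq', hlt, hstep⟩
    · exact hT (Nat.zero_le _) h0
    · have hsub : Q.filter (w q' < w ·) ⊂ Q.filter (w q < w ·) :=
        (ssubset_iff_of_subset (monotone_filter_right _ fun _ _ => hlt.trans)).2
          ⟨q', mem_filter.2 ⟨hq', hlt⟩, by simp⟩
      exact hstep n (ih q' hq' (by have := card_lt_card hsub; omega))

def subIterate {α : Type*} [Sub α] (P S : Set α) : ℕ → Set α
  | 0 => P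
  | k + 1 => subIterate P S k ∪ (subIterate P S k - S)

namespace subIterate

variable {α : Type*} [Sub α] (P S : Set α)

theorem monotone : Monotone (subIterate P S) :=
  monotone_nat_of_le_succ fun _ => Set.subset_union_left

theorem finite (hP : P.Finite) (hS : S.Finite) (k : ℕ) : (subIterate P S k).Finite := by
  induction k with
  | zero => exact hP
  | succ k ih => exact ih.union (ih.image2 (· - ·) hS)

variable {P S}

theorem sub_mem {k : ℕ} {x a : α} (hx : x ∈ subIterate P S k) (ha : a ∈ S) :
    x - a ∈ subIterate P S (k + 1) :=
  Or.inr (Set.sub_mem_sub hx ha)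

end subIterate

theorem Polynomial.finite_setOf_monic_natDegree_roots_subset {K : Type*} [Field K]
    [IsAlgClosed K] {s : Set K} (hs : s.Finite) (n : ℕ) :
    {f : K[X] | f.Monic ∧ f.natDegree = n ∧ ∀ x ∈ f.roots, x ∈ s}.Finite := by
  classical
  refine Set.Finite.of_finite_image (f := roots) ?_ fun f hf g hg hfg =>
    by rw [(IsAlgClosed.splits f).eq_prod_roots_of_monic hf.1,
      (IsAlgClosed.splits g).eq_prod_roots_of_monic hg.1, hfg]
  refine (n • hs.toFinset.val).powerset.finite_toSet.subset ?_
  rintro _ ⟨f, ⟨-, hdeg, hroots⟩, rfl⟩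
  refine Multiset.mem_powerset.2 (Multiset.le_iff_count.2 fun x => ?_)
  by_cases hx : x ∈ f.roots
  · rw [Multiset.count_nsmul, Multiset.count_eq_one_of_mem hs.toFinset.nodup
      (hs.mem_toFinset.2 (hroots x hx)), mul_one, ← hdeg, ← IsAlgClosed.card_roots_eq_natDegree]
    exact Multiset.count_le_card _ _
  · simp [Multiset.count_eq_zero_of_notMem hx]

theorem Polynomial.isRoot_or_exists_isRoot_of_dvd_mul_prod {R ι κ : Type*} [CommRing R]
    [IsDomain R] {f p : R[X]} {h : ι → R[X]} {s : Finset ι} {u : ι → Finset κ}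
    {a : ι → κ → R} {b x : R}
    (hdvd : f ∣ p.comp (X + C b) * ∏ j ∈ s, ∏ t ∈ u j, (h j).comp (X + C (a j t)))
    (hx : f.IsRoot x) : p.IsRoot (x + b) ∨ ∃ j ∈ s, ∃ t ∈ u j, (h j).IsRoot (x + a j t) := by
  simpa [eval_prod, Finset.prod_eq_zero_iff] using eval_eq_zero_of_dvd_of_eval_eq_zero hdvd hx

section GKLO

variable {I : Type*} (c : I → I → ℤ) (d : I → ℤ)

noncomputable def gkloShift (i j : I) (t : ℕ) : ℂ :=
  ((d i : ℤ) : ℂ) - ((d i * c i j : ℤ) : ℂ) / 2 - (t : ℂ) * ((d j : ℤ) : ℂ)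

def gkloShifts : Set ℂ :=
  ⋃ i, ⋃ j, gkloShift c d i j '' Set.Iic (-(c j i)).toNat

theorem gkloShifts_finite [Finite I] : (gkloShifts c d).Finite :=
  Set.finite_iUnion fun _ => Set.finite_iUnion fun _ => (Set.finite_Iic _).image _

variable {c d}

theorem add_add_mul_pos_of_posDef (hcdiag : ∀ i, c i i = 2)
    (hsym : ∀ i j, d i * c i j = d j * c j i)
    (hposdef : (Matrix.of fun i j => ((d i * c i j : ℤ) : ℝ)).PosDef) {i j : I} (hij : i ≠ j) :
    0 < d i + d j + d i * c i j := by
  have h := hposdef.apply_pair_sum_pos hij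
  simp only [Matrix.of_apply, hcdiag, ← hsym i j] at h
  push_cast at h
  exact_mod_cast (by linarith : (0 : ℝ) < d i + d j + d i * c i j)

theorem lt_two_mul_re_gkloShift_add (hcdiag : ∀ i, c i i = 2) (hd : ∀ i, 0 < d i)
    (hsym : ∀ i j, d i * c i j = d j * c j i)
    (hposdef : (Matrix.of fun i j => ((d i * c i j : ℤ) : ℝ)).PosDef) {i j : I} {t : ℕ}
    (hji : c j i < 0) (ht : t ≤ (-(c j i)).toNat) :
    (d i : ℝ) < 2 * (gkloShift c d i j t).re + d j := by
  have hij : i ≠ j := by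
    rintro rfl
    linarith [hcdiag i]
  have hpos := add_add_mul_pos_of_posDef hcdiag hsym hposdef hij
  have htd : t * d j ≤ -(d i * c i j) := by
    have := mul_le_mul_of_nonneg_right (by omega : (t : ℤ) ≤ -c j i) (hd j).le
    linarith [hsym i j]
  have hre : 2 * (gkloShift c d i j t).re = 2 * d i - d i * c i j - 2 * t * d j := by
    simp only [gkloShift, Int.cast_mul, Complex.sub_re, Complex.intCast_re, Complex.div_ofNat_re,
      Complex.mul_re, Complex.intCast_im, mul_zero, sub_zero, Complex.natCast_re,
      Complex.natCast_im]
    ring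
  rw [hre]
  exact_mod_cast (by linarith : d i < 2 * d i - d i * c i j - 2 * t * d j + d j)

theorem mem_subIterate_of_mem_roots [Fintype I] (hcdiag : ∀ i, c i i = 2) (hd : ∀ i, 0 < d i)
    (hsym : ∀ i j, d i * c i j = d j * c j i)
    (hposdef : (Matrix.of fun i j => ((d i * c i j : ℤ) : ℝ)).PosDef) {p g : I → ℂ[X]}
    (hg : ∀ i, g i ≠ 0)
    (hdvd : ∀ i, g i ∣ (p i).comp (X + C ((d i : ℤ) : ℂ)) *
      ∏ j ∈ Finset.univ.filter (fun j => c j i < 0), ∏ t ∈ Finset.Icc 1 (-(c j i)).toNat,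
        (g j).comp (X + C (gkloShift c d i j t)))
    {i : I} {x : ℂ} (hx : x ∈ (g i).roots) :
    x ∈ subIterate (⋃ i, (· + ((d i : ℤ) : ℂ)) ⁻¹' {r | (p i).IsRoot r}) (gkloShifts c d)
      (∑ i, (g i).natDegree) := by
  set Q := Finset.univ.sigma fun i => (g i).roots.toFinset
  have hQ : Q.card ≤ ∑ i, (g i).natDegree := by
    rw [Finset.card_sigma]
    gcongr with i
    exact (Multiset.toFinset_card_le _).trans (card_roots' _)
  refine subIterate.monotone _ _ hQ <| Finset.mem_of_weight_ascent (q := ⟨i, x⟩)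
    (T := fun k => {q : (_ : I) × ℂ | q.2 ∈ subIterate _ _ k})
    (fun q : (_ : I) × ℂ => 2 * q.2.re + d q.1)
    (fun _ _ hkl _ hq => subIterate.monotone _ _ hkl hq) ?_ (by simpa [Q] using hx)
  rintro ⟨i, y⟩ hyQ
  have hy : (g i).IsRoot y := by simpa [Q, hg i] using hyQ
  rcases isRoot_or_exists_isRoot_of_dvd_mul_prod (hdvd i) hy with hp | ⟨j, hj, t, ht, hroot⟩
  · exact Or.inl (Set.mem_iUnion.2 ⟨i, hp⟩)
  · simp only [Finset.mem_filter, Finset.mem_univ, true_and, Finset.mem_Icc] at hj ht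
    refine Or.inr ⟨⟨j, y + gkloShift c d i j t⟩, by simpa [Q, hg j] using hroot, ?_,
      fun k hk => ?_⟩
    · have := lt_two_mul_re_gkloShift_add hcdiag hd hsym hposdef hj ht.2
      simp only [Complex.add_re]
      linarith
    · simpa using subIterate.sub_mem hk
        (Set.mem_iUnion.2 ⟨i, Set.mem_iUnion.2 ⟨j, t, ht.2, rfl⟩⟩)

end GKLO

theorem finiteness_of_GKLO_solutions_general {I : Type*} [Fintype I]
    (c : I → I → ℤ) (d : I → ℤ)
    (hcdiag : ∀ i, c i i = 2)
    (hd : ∀ i, 0 < d i)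
    (hsym : ∀ i j, d i * c i j = d j * c j i)
    (hposdef : (Matrix.of fun i j => ((d i * c i j : ℤ) : ℝ)).PosDef)
    (m : I → ℕ) (p q : I → ℂ[X]) (hp : ∀ i, p i ≠ 0) :
    {g : I → ℂ[X] |
        (∀ i, (g i).Monic ∧ (g i).natDegree = m i) ∧
        ∀ i, g i * (q i).comp (X + C ((d i : ℤ) : ℂ)) ∣
          (p i).comp (X + C ((d i : ℤ) : ℂ)) *
            ∏ j ∈ Finset.univ.filter (fun j => c j i < 0),
              ∏ t ∈ Finset.Icc 1 (-(c j i)).toNat,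
                (g j).comp (X + C (((d i : ℤ) : ℂ) - ((d i * c i j : ℤ) : ℂ) / 2 -
                  (t : ℂ) * ((d j : ℤ) : ℂ)))}.Finite := by
  have hP : (⋃ i, (· + ((d i : ℤ) : ℂ)) ⁻¹' {r | (p i).IsRoot r}).Finite :=
    Set.finite_iUnion fun i =>
      (finite_setOfPred_isRoot (hp i)).preimage (add_left_injective _).injOn
  refine (Set.Finite.pi' fun i => finite_setOf_monic_natDegree_roots_subset
    (subIterate.finite _ _ hP (gkloShifts_finite c d) (∑ i, m i)) (m i)).subset ?_
  rintro g ⟨hdeg, hdvd⟩ i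
  refine ⟨(hdeg i).1, (hdeg i).2, fun x hx => ?_⟩
  simpa only [(hdeg _).2] using mem_subIterate_of_mem_roots hcdiag hd hsym hposdef
    (fun j => (hdeg j).1.ne_zero) (fun j => dvd_of_mul_right_dvd (hdvd j)) hx

/-- Finiteness of the set of tuples of monic polynomials of prescribed degrees
satisfying the GKLO divisibility conditions: the polynomial-theoretic core of the
theorem that a truncated shifted Yangian admits only finitely many irreducible
representations in category `O^{sh}`.

Here `I` is the (finite) set of Dynkin nodes, `c` is a generalized Cartan matrix of
finite type (the symmetrized matrix `(d i * c i j)` is positive definite), `d` is a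
symmetrizer with positive entries, and `d_{ij} = d i * c i j / 2`. -/
theorem finiteness_of_GKLO_solutions {I : Type*} [Fintype I] [DecidableEq I]
    (c : I → I → ℤ) (d : I → ℤ)
    (hcdiag : ∀ i, c i i = 2)
    (hcoff : ∀ i j, i ≠ j → c i j ≤ 0)
    (hczero : ∀ i j, c i j = 0 ↔ c j i = 0)
    (hd : ∀ i, 0 < d i)
    (hsym : ∀ i j, d i * c i j = d j * c j i)
    (hposdef : (Matrix.of fun i j => ((d i * c i j : ℤ) : ℝ)).PosDef)
    (m : I → ℕ) (p q : I → ℂ[X]) (hp : ∀ i, p i ≠ 0) (hq : ∀ i, q i ≠ 0) :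
    {g : I → ℂ[X] |
        (∀ i, (g i).Monic ∧ (g i).natDegree = m i) ∧
        ∀ i, g i * (q i).comp (X + C ((d i : ℤ) : ℂ)) ∣
          (p i).comp (X + C ((d i : ℤ) : ℂ)) *
            ∏ j ∈ Finset.univ.filter (fun j => c j i < 0),
              ∏ t ∈ Finset.Icc 1 (-(c j i)).toNat,
                (g j).comp (X + C (((d i : ℤ) : ℂ) - ((d i * c i j : ℤ) : ℂ) / 2 -
                  (t : ℂ) * ((d j : ℤ) : ℂ)))}.Finite :=
  finiteness_of_GKLO_solutions_general c d hcdiag hd hsym hposdef m p q hp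
end

section
/- Every e ∈ 𝓡 admits a standard factorization. (Existence part of the lemma on standard factorizations of rational functions, used to factor every irreducible Y(sl₂)-module in category O^{sh} into prefundamental and Kirillov–Reshetikhin modules.) -/
open Polynomial

/-- The set `Δ_b^a ⊆ ℂ`: equal to `{k ∈ ℕ : k < b − a}` if `b − a ∈ ℕ`,
and to `ℕ` (viewed inside `ℂ`) otherwise. -/
def DeltaSet (a b : ℂ) : Set ℂ :=
  {x | ∃ k : ℕ, x = (k : ℂ) ∧ ∀ n : ℕ, (n : ℂ) = b - a → k < n}

/-- `b − a ∈ ℕ`. -/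
def natDiff (a b : ℂ) : Prop := ∃ n : ℕ, (n : ℂ) = b - a

/-- The linear rational function `u − a`. -/
noncomputable def lin (a : ℂ) : RatFunc ℂ :=
  algebraMap (Polynomial ℂ) (RatFunc ℂ) (X - C a)

/-- The rational function `∏_{x∈X}(u−x) · ∏_{(y,z)∈P}(u−y)/(u−z) · ∏_{w∈W}(u−w)⁻¹`. -/
noncomputable def stdProd (X : Multiset ℂ) (P : Multiset (ℂ × ℂ)) (W : Multiset ℂ) :
    RatFunc ℂ :=
  (X.map lin).prod * (P.map fun p => lin p.1 / lin p.2).prod *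
    (W.map fun w => (lin w)⁻¹).prod

/-- `(X, P, W)` is a standard factorization of `e ∈ 𝓡`. -/
def IsStdFact (e : RatFunc ℂ) (X : Multiset ℂ) (P : Multiset (ℂ × ℂ)) (W : Multiset ℂ) :
    Prop :=
  e = stdProd X P W ∧
  (∀ p ∈ P, ∃ n : ℕ, 0 < n ∧ (n : ℂ) = p.2 - p.1) ∧
  (∀ p ∈ P, ∀ q ∈ P,
    ¬(p.2 - q.1 ∈ DeltaSet p.1 p.2 ∧ p.2 - q.1 ∈ DeltaSet q.1 q.2)) ∧
  (∀ x ∈ X, ∀ p ∈ P, p.2 - x ∉ DeltaSet p.1 p.2) ∧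
  (∀ x ∈ X, ∀ w ∈ W, ¬ natDiff x w) ∧
  (∀ w ∈ W, ∀ p ∈ P, w - p.1 ∉ DeltaSet p.1 p.2)

/-!
Pair zeros with poles greedily: among all pairs (x, w) of a zero and a pole with w − x ∈ ℕ,
take one whose gap n is smallest, record the factor (u − x)/(u − w) and recurse on the remaining
zeros and poles. Every difference w' − x' of a zero and a pole is then either not a natural
number or at least n, so it never lies in Δ_w^x = {0, …, n − 1}; all the conditions of a standard
factorization that involve the new pair are instances of this. When no such pair is left, the
remaining zeros and poles satisfy (iv).
-/

lemma not_mem_deltaSet_of_le {a b c : ℂ} {n : ℕ} (hn : (n : ℂ) = b - a)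
    (hc : ∀ k : ℕ, (k : ℂ) = c → n ≤ k) : c ∉ DeltaSet a b := by
  rintro ⟨k, rfl, hk⟩
  exact (hc k rfl).not_gt (hk n hn)

lemma stdProd_cons_pair (X : Multiset ℂ) (P : Multiset (ℂ × ℂ)) (W : Multiset ℂ) (p : ℂ × ℂ) :
    stdProd X (p ::ₘ P) W = stdProd X P W * (lin p.1 / lin p.2) := by
  simp only [stdProd, Multiset.map_cons, Multiset.prod_cons]
  ring

lemma stdProd_cons_cons (X W : Multiset ℂ) (x w : ℂ) :
    stdProd (x ::ₘ X) 0 (w ::ₘ W) = stdProd X 0 W * (lin x / lin w) := by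
  simp only [stdProd, Multiset.map_cons, Multiset.prod_cons, div_eq_mul_inv]
  ring

lemma IsStdFact.cons_pair_of_minimal {e : RatFunc ℂ} {X W X₀ W₀ : Multiset ℂ}
    {P : Multiset (ℂ × ℂ)} (h : IsStdFact e X P W)
    (hX : ∀ x ∈ X, x ∈ X₀) (hW : ∀ w ∈ W, w ∈ W₀) (hP : ∀ p ∈ P, p.1 ∈ X₀ ∧ p.2 ∈ W₀)
    {x₀ w₀ : ℂ} {n : ℕ} (hx₀ : x₀ ∈ X₀) (hw₀ : w₀ ∈ W₀) (hn : 0 < n) (hgap : (n : ℂ) = w₀ - x₀)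
    (hmin : ∀ x ∈ X₀, ∀ w ∈ W₀, ∀ k : ℕ, (k : ℂ) = w - x → n ≤ k) :
    IsStdFact (e * (lin x₀ / lin w₀)) X ((x₀, w₀) ::ₘ P) W := by
  obtain ⟨rfl, hpos, hPP, hXP, hXW, hWP⟩ := h
  have hnew : ∀ x ∈ X₀, ∀ w ∈ W₀, w - x ∉ DeltaSet x₀ w₀ := fun x hx w hw =>
    not_mem_deltaSet_of_le hgap (hmin x hx w hw)
  refine ⟨(stdProd_cons_pair X P W (x₀, w₀)).symm, ?_, ?_, ?_, hXW, ?_⟩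
  · simp only [Multiset.forall_mem_cons]
    exact ⟨⟨n, hn, hgap⟩, hpos⟩
  · simp only [Multiset.forall_mem_cons, not_and]
    refine ⟨⟨fun h _ => hnew x₀ hx₀ w₀ hw₀ h, fun q hq h _ => hnew q.1 (hP q hq).1 w₀ hw₀ h⟩,
      fun p hp => ⟨fun _ h => hnew x₀ hx₀ p.2 (hP p hp).2 h, fun q hq => ?_⟩⟩
    simpa only [not_and] using hPP p hp q hq
  · exact fun x hx => Multiset.forall_mem_cons.2 ⟨hnew x (hX x hx) w₀ hw₀, hXP x hx⟩
  · exact fun w hw => Multiset.forall_mem_cons.2 ⟨hnew x₀ hx₀ w (hW w hw), hWP w hw⟩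

lemma exists_isStdFact_stdProd (X W : Multiset ℂ) (hXW : Disjoint X W) :
    ∃ X' P W', (∀ x ∈ X', x ∈ X) ∧ (∀ w ∈ W', w ∈ W) ∧ (∀ p ∈ P, p.1 ∈ X ∧ p.2 ∈ W) ∧
      IsStdFact (stdProd X 0 W) X' P W' := by
  classical
  induction X using Multiset.strongInductionOn generalizing W with
  | ih X ih =>
  by_cases hgaps : ∃ n : ℕ, ∃ x ∈ X, ∃ w ∈ W, (n : ℂ) = w - x
  swap
  · push Not at hgaps
    exact ⟨X, 0, W, fun _ => id, fun _ => id, by simp, ⟨rfl, by simp, by simp, by simp,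
      fun x hx w hw ⟨n, hn⟩ => hgaps n x hx w hw hn, by simp⟩⟩
  obtain ⟨x₀, hx₀, w₀, hw₀, hgap⟩ := Nat.find_spec hgaps
  have hmin : ∀ x ∈ X, ∀ w ∈ W, ∀ k : ℕ, (k : ℂ) = w - x → Nat.find hgaps ≤ k :=
    fun x hx w hw k hk => Nat.find_min' hgaps ⟨x, hx, w, hw, hk⟩
  have hpos : 0 < Nat.find hgaps := by
    refine Nat.pos_of_ne_zero fun h0 => Multiset.disjoint_left.1 hXW hx₀ ?_
    rw [h0, Nat.cast_zero, eq_comm, sub_eq_zero] at hgap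
    exact hgap ▸ hw₀
  obtain ⟨X', P, W', hX', hW', hP, hfact⟩ := ih (X.erase x₀) (Multiset.erase_lt.2 hx₀)
    (W.erase w₀) (hXW.mono (Multiset.erase_le _ _) (Multiset.erase_le _ _))
  have hXX' : ∀ x ∈ X', x ∈ X := fun x hx => Multiset.mem_of_mem_erase (hX' x hx)
  have hWW' : ∀ w ∈ W', w ∈ W := fun w hw => Multiset.mem_of_mem_erase (hW' w hw)
  have hPXW : ∀ p ∈ P, p.1 ∈ X ∧ p.2 ∈ W := fun p hp =>
    ⟨Multiset.mem_of_mem_erase (hP p hp).1, Multiset.mem_of_mem_erase (hP p hp).2⟩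
  refine ⟨X', (x₀, w₀) ::ₘ P, W', hXX', hWW', Multiset.forall_mem_cons.2 ⟨⟨hx₀, hw₀⟩, hPXW⟩, ?_⟩
  rw [← Multiset.cons_erase hx₀, ← Multiset.cons_erase hw₀, stdProd_cons_cons]
  exact hfact.cons_pair_of_minimal hXX' hWW' hPXW hx₀ hw₀ hpos hgap hmin

lemma algebraMap_eq_prod_map_lin_roots {p : ℂ[X]} (hp : p.Monic) :
    algebraMap ℂ[X] (RatFunc ℂ) p = (p.roots.map lin).prod := by
  conv_lhs => rw [(IsAlgClosed.splits p).eq_prod_roots_of_monic hp]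
  rw [map_multiset_prod, Multiset.map_map]
  rfl

lemma RatFunc.stdProd_roots_num_denom {e : RatFunc ℂ} (hnum : e.num.Monic)
    (hden : e.denom.Monic) :
    stdProd e.num.roots 0 e.denom.roots = e := by
  conv_rhs => rw [← RatFunc.num_div_denom e, algebraMap_eq_prod_map_lin_roots hnum,
    algebraMap_eq_prod_map_lin_roots hden]
  simp [stdProd, Multiset.prod_map_inv, div_eq_mul_inv]

lemma RatFunc.disjoint_roots_num_denom (e : RatFunc ℂ) : Disjoint e.num.roots e.denom.roots :=
  Multiset.disjoint_left.2 fun hx hx' =>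
    ((aeval_ne_zero_of_isCoprime e.isCoprime_num_denom _).elim
      (· (mem_roots'.1 hx).2) (· (mem_roots'.1 hx').2))

theorem stdFact_exists_general (e : RatFunc ℂ)
    (hnum : e.num.Monic) (hden : e.denom.Monic) :
    ∃ (X : Multiset ℂ) (P : Multiset (ℂ × ℂ)) (W : Multiset ℂ), IsStdFact e X P W := by
  obtain ⟨X, P, W, -, -, -, h⟩ :=
    exists_isStdFact_stdProd _ _ (RatFunc.disjoint_roots_num_denom e)
  rw [RatFunc.stdProd_roots_num_denom hnum hden] at h
  exact ⟨X, P, W, h⟩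

/-- Every `e ∈ 𝓡` (a nonzero rational function whose numerator and denominator in lowest
terms are monic) admits a standard factorization. -/
theorem stdFact_exists (e : RatFunc ℂ) (he : e ≠ 0)
    (hnum : e.num.Monic) (hden : e.denom.Monic) :
    ∃ (X : Multiset ℂ) (P : Multiset (ℂ × ℂ)) (W : Multiset ℂ), IsStdFact e X P W :=
  stdFact_exists_general e hnum hden
end

section
/- If (X, P, W) and (X′, P′, W′) are standard factorizations of the same e ∈ 𝓡, then X = X′, W = W′, and P = P′ as multisets; equivalently, the monic polynomials ∏_{x∈X}(u−x) and ∏_{w∈W}(u−w) and the multiset of pairs P are uniquely determined by e. (Uniqueness part of the lemma on standard factorizations.) -/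
/-
Clearing denominators, `e = N / D` with `N = ∏ (u - x) ∏ (u - y)` over `X` and the first
coordinates of `P`, and `D = ∏ (u - z) ∏ (u - w)` over the second coordinates of `P` and `W`;
so two standard factorizations of `e` satisfy `X + P₁ + P'₂ + W' = X' + P'₁ + P₂ + W`.

Order each coset `a + ℤ` by `a ≼ b ↔ b - a ∈ ℕ`, and let `crossing P c` count the pairs
`(y, z) ∈ P` with `y < c ≤ z`. Conditions (iii) and (v) say that `crossing P` vanishes at the
points of `X` and just above the points of `W`. If `crossing P c > crossing P' c`, walking down
from `c` to the first place where the difference of the two crossing functions rises yields a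
point of `X'` below `c`, and walking up yields a point of `W'` above `c`, against (iv). So the
crossing functions agree, which gives `P₁ + P'₂ = P'₁ + P₂` and then `X + W' = X' + W`; these
split because `X`, `W` are disjoint by (iv) and `P₁`, `P₂` are disjoint by (ii).

Finally (ii) says that no two intervals of `P` interlace, so `P` is recovered from its
endpoints: the pair starting at the largest left endpoint `y` ends at the smallest right endpoint
above `y`. Real parts serve to find these extremal points, as `a ≼ b` implies `a.re ≤ b.re`.
-/

open Polynomial

open Multiset Filter

local infix:50 " ≼ " => natDiff

lemma Nat.exists_lt_and_le_succ {f g : ℕ → ℕ} (h₀ : g 0 < f 0) {N : ℕ} (hN : f N ≤ g N) :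
    ∃ k, g k < f k ∧ f (k + 1) ≤ g (k + 1) := by
  induction N with
  | zero => omega
  | succ N ih => exact (le_or_gt (f N) (g N)).elim ih fun h => ⟨N, h, hN⟩

theorem Multiset.eq_and_eq_of_add_eq_add_of_disjoint {α : Type*} {s t s' t' : Multiset α}
    (h : s + t' = s' + t) (hst : Disjoint s t) (hst' : Disjoint s' t') : s = s' ∧ t = t' := by
  classical
  have key : ∀ a, s.count a = s'.count a ∧ t.count a = t'.count a := fun a => by
    have := congrArg (count a) h
    have h₁ : s.count a = 0 ∨ t.count a = 0 := by
      by_cases ha : a ∈ s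
      · exact Or.inr (count_eq_zero.2 (disjoint_left.1 hst ha))
      · exact Or.inl (count_eq_zero.2 ha)
    have h₂ : s'.count a = 0 ∨ t'.count a = 0 := by
      by_cases ha : a ∈ s'
      · exact Or.inr (count_eq_zero.2 (disjoint_left.1 hst' ha))
      · exact Or.inl (count_eq_zero.2 ha)
    simp only [count_add] at this
    omega
  exact ⟨ext.2 fun a => (key a).1, ext.2 fun a => (key a).2⟩

section LatticeOrder

variable {a b c : ℂ}

lemma natDiff_congr {a' b' : ℂ} (h : b - a = b' - a') : a ≼ b ↔ a' ≼ b' := by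
  simp only [natDiff, h]

lemma natDiff_refl (a : ℂ) : a ≼ a := ⟨0, by simp⟩

lemma natDiff_trans (hab : a ≼ b) (hbc : b ≼ c) : a ≼ c := by
  obtain ⟨m, hm⟩ := hab
  obtain ⟨n, hn⟩ := hbc
  exact ⟨m + n, by push_cast; linear_combination hm + hn⟩

lemma natDiff_add_one_self (a : ℂ) : a ≼ a + 1 := ⟨1, by simp⟩

lemma re_le_of_natDiff (h : a ≼ b) : a.re ≤ b.re := by
  obtain ⟨n, hn⟩ := h
  have : (n : ℝ) = b.re - a.re := by simpa using congrArg Complex.re hn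
  linarith [n.cast_nonneg (α := ℝ)]

lemma not_natDiff_add_one_self (a : ℂ) : ¬ a + 1 ≼ a := fun h => by
  have := re_le_of_natDiff h
  norm_num at this

lemma natDiff_of_add_one_natDiff (h : a + 1 ≼ b) : a ≼ b := natDiff_trans (natDiff_add_one_self a) h

lemma ne_of_add_one_natDiff (h : a + 1 ≼ b) : a ≠ b := by
  rintro rfl
  exact not_natDiff_add_one_self a h

lemma add_one_natDiff_add_one_iff : a + 1 ≼ b + 1 ↔ a ≼ b := natDiff_congr (by ring)

lemma natDiff_iff_eq_or_add_one_natDiff : a ≼ b ↔ a = b ∨ a + 1 ≼ b := by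
  refine ⟨fun ⟨n, hn⟩ => ?_, fun h => h.elim (· ▸ natDiff_refl a) natDiff_of_add_one_natDiff⟩
  cases n with
  | zero => exact Or.inl (by simpa [sub_eq_zero, eq_comm] using hn)
  | succ n => exact Or.inr ⟨n, by push_cast at hn; linear_combination hn⟩

lemma add_one_natDiff_iff_of_ne (h : a ≠ b) : a + 1 ≼ b ↔ a ≼ b := by
  simp [natDiff_iff_eq_or_add_one_natDiff (a := a), h]

lemma natDiff_of_intCast_eq_sub {m : ℤ} (hm : (m : ℂ) = b - a) (hre : a.re ≤ b.re) :
    a ≼ b := by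
  have hre' : (m : ℝ) = b.re - a.re := by simpa using congrArg Complex.re hm
  lift m to ℕ using by exact_mod_cast (show (0 : ℝ) ≤ m by linarith)
  exact ⟨m, by exact_mod_cast hm⟩

end LatticeOrder

lemma mem_DeltaSet_iff {y z v : ℂ} (h : y ≼ z) :
    v ∈ DeltaSet y z ↔ 0 ≼ v ∧ y + v + 1 ≼ z := by
  obtain ⟨n, hn⟩ := h
  constructor
  · rintro ⟨k, rfl, hk⟩
    obtain ⟨j, rfl⟩ : ∃ j, n = k + j + 1 := ⟨n - k - 1, by have := hk n hn; omega⟩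
    exact ⟨⟨k, by simp⟩, ⟨j, by push_cast at hn; linear_combination hn⟩⟩
  · rintro ⟨⟨k, hk⟩, ⟨j, hj⟩⟩
    refine ⟨k, by linear_combination -hk, fun m hm => ?_⟩
    have : (m : ℂ) = (k + j + 1 : ℕ) := by push_cast; linear_combination hm - hk - hj
    have := Nat.cast_injective this
    omega

lemma stdProd_eq_div (X : Multiset ℂ) (P : Multiset (ℂ × ℂ)) (W : Multiset ℂ) :
    stdProd X P W =
      algebraMap ℂ[X] (RatFunc ℂ) ((X + P.map Prod.fst).map fun a => Polynomial.X - C a).prod /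
        algebraMap ℂ[X] (RatFunc ℂ)
          ((P.map Prod.snd + W).map fun a => Polynomial.X - C a).prod := by
  unfold stdProd lin
  simp only [prod_map_div, prod_map_inv, Multiset.map_add, prod_add, map_mul,
    map_multiset_prod, Multiset.map_map, Function.comp_def]
  ring

lemma stdProd_eq_stdProd_iff {X X' W W' : Multiset ℂ} {P P' : Multiset (ℂ × ℂ)} :
    stdProd X P W = stdProd X' P' W' ↔
      X + P.map Prod.fst + (P'.map Prod.snd + W') =
        X' + P'.map Prod.fst + (P.map Prod.snd + W) := by
  have hne : ∀ s : Multiset ℂ,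
      algebraMap ℂ[X] (RatFunc ℂ) (s.map fun a => Polynomial.X - C a).prod ≠ 0 := fun s =>
    (map_ne_zero_iff _ (RatFunc.algebraMap_injective ℂ)).2
      (monic_multiset_prod_of_monic _ _ fun a _ => monic_X_sub_C a).ne_zero
  rw [stdProd_eq_div, stdProd_eq_div, div_eq_div_iff (hne _) (hne _), ← map_mul, ← map_mul,
    (RatFunc.algebraMap_injective ℂ).eq_iff, ← prod_add, ← prod_add, ← Multiset.map_add,
    ← Multiset.map_add]
  exact ⟨fun h => by simpa only [roots_multiset_prod_X_sub_C] using congrArg roots h,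
    fun h => by rw [h]⟩

def Interlaced (p q : ℂ × ℂ) : Prop := p.1 + 1 ≼ q.1 ∧ q.1 ≼ p.2 ∧ p.2 + 1 ≼ q.2

lemma mem_of_re_extremal {P : Multiset (ℂ × ℂ)} (hP : ∀ p ∈ P, p.1 + 1 ≼ p.2)
    (hP' : ∀ p ∈ P, ∀ q ∈ P, ¬ Interlaced p q) {y t : ℂ} (hy : y ∈ P.map Prod.fst)
    (hymax : ∀ x ∈ P.map Prod.fst, x.re ≤ y.re) (ht : t ∈ P.map Prod.snd) (hyt : y + 1 ≼ t)
    (htmin : ∀ z ∈ P.map Prod.snd, y + 1 ≼ z → t.re ≤ z.re) : (y, t) ∈ P := by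
  obtain ⟨p, hp, rfl⟩ := mem_map.1 hy
  obtain ⟨q, hq, rfl⟩ := mem_map.1 ht
  by_contra hpq
  have hq₁ : q.1 + 1 ≼ p.1 := by
    refine (add_one_natDiff_iff_of_ne fun hq₁ => hpq ?_).2 ?_
    · rw [← hq₁]
      exact hq
    · obtain ⟨i, hi⟩ := hP q hq
      obtain ⟨j, hj⟩ := hyt
      exact natDiff_of_intCast_eq_sub (m := i - j) (by push_cast; linear_combination hi - hj)
        (hymax _ (mem_map_of_mem _ hq))
  have hp₂ : q.2 + 1 ≼ p.2 := by
    refine (add_one_natDiff_iff_of_ne fun hp₂ => hpq ?_).2 ?_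
    · rw [hp₂]
      exact hp
    · obtain ⟨i, hi⟩ := hP p hp
      obtain ⟨j, hj⟩ := hyt
      exact natDiff_of_intCast_eq_sub (m := i - j) (by push_cast; linear_combination hi - hj)
        (htmin _ (mem_map_of_mem _ hp) (hP p hp))
  exact hP' q hq p hp ⟨hq₁, natDiff_of_add_one_natDiff hyt, hp₂⟩

lemma eq_of_map_fst_eq_of_map_snd_eq {P Q : Multiset (ℂ × ℂ)}
    (hP : ∀ p ∈ P, p.1 + 1 ≼ p.2) (hP' : ∀ p ∈ P, ∀ q ∈ P, ¬ Interlaced p q)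
    (hQ : ∀ p ∈ Q, p.1 + 1 ≼ p.2) (hQ' : ∀ p ∈ Q, ∀ q ∈ Q, ¬ Interlaced p q)
    (hf : P.map Prod.fst = Q.map Prod.fst) (hs : P.map Prod.snd = Q.map Prod.snd) : P = Q := by
  classical
  induction P using Multiset.strongInductionOn generalizing Q with
  | ih P ih =>
  rcases eq_or_ne (P.map Prod.fst) 0 with h0 | h0
  · rw [Multiset.map_eq_zero.1 h0, Multiset.map_eq_zero.1 (hf.symm.trans h0)]
  obtain ⟨y, hy, hymax⟩ := exists_max_image Complex.re h0
  obtain ⟨p, hp, rfl⟩ := mem_map.1 hy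
  obtain ⟨t, ht, htmin⟩ := exists_min_image Complex.re
    (ne_of_mem_of_not_mem' (mem_filter.2 ⟨mem_map_of_mem Prod.snd hp, hP p hp⟩)
      (notMem_zero _))
  rw [mem_filter] at ht
  have htmin' : ∀ z ∈ P.map Prod.snd, p.1 + 1 ≼ z → t.re ≤ z.re := fun z hz hpz =>
    htmin z (mem_filter.2 ⟨hz, hpz⟩)
  have hPmem := mem_of_re_extremal hP hP' hy hymax ht.1 ht.2 htmin'
  have hQmem := mem_of_re_extremal hQ hQ' (hf ▸ hy) (hf ▸ hymax) (hs ▸ ht.1) ht.2 (hs ▸ htmin')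
  rw [← cons_erase hPmem, ← cons_erase hQmem,
    ih _ (erase_lt.2 hPmem) (fun p hp => hP p (mem_of_mem_erase hp))
      (fun p hp q hq => hP' p (mem_of_mem_erase hp) q (mem_of_mem_erase hq))
      (fun p hp => hQ p (mem_of_mem_erase hp))
      (fun p hp q hq => hQ' p (mem_of_mem_erase hp) q (mem_of_mem_erase hq))
      (by rw [map_erase_of_mem _ _ hPmem, map_erase_of_mem _ _ hQmem, hf])
      (by rw [map_erase_of_mem _ _ hPmem, map_erase_of_mem _ _ hQmem, hs])]

open scoped Classical in
noncomputable def crossing (P : Multiset (ℂ × ℂ)) (c : ℂ) : ℕ :=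
  P.countP fun p => p.1 + 1 ≼ c ∧ c ≼ p.2

lemma crossing_add_one_add_count_map_snd {P : Multiset (ℂ × ℂ)} (hP : ∀ p ∈ P, p.1 + 1 ≼ p.2)
    (c : ℂ) :
    crossing P (c + 1) + (P.map Prod.snd).count c = crossing P c + (P.map Prod.fst).count c := by
  induction P using Multiset.induction_on with
  | empty => simp [crossing]
  | cons p P ih =>
    have ih := ih fun q hq => hP q (mem_cons_of_mem hq)
    have hp := hP p (mem_cons_self p P)
    simp only [crossing, countP_cons, map_cons, count_cons] at ih ⊢
    rcases eq_or_ne c p.1 with rfl | hc1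
    · simp only [add_one_natDiff_add_one_iff, natDiff_refl, hp, and_self, ↓reduceIte,
        ne_of_add_one_natDiff hp, add_zero, not_natDiff_add_one_self, false_and]
      omega
    rcases eq_or_ne c p.2 with rfl | hc2
    · simp only [not_natDiff_add_one_self, and_false, ↓reduceIte, add_zero, hp, natDiff_refl,
        and_self, hc1]
      omega
    · rw [add_one_natDiff_add_one_iff, add_one_natDiff_iff_of_ne hc2,
        add_one_natDiff_iff_of_ne hc1.symm]
      simp only [hc1, hc2, if_false]
      omega

lemma eventually_crossing_sub_eq_zero (P : Multiset (ℂ × ℂ)) (c : ℂ) :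
    ∀ᶠ k : ℕ in atTop, crossing P (c - k) = 0 := by
  classical
  have : ∀ p ∈ P.toFinset, ∀ᶠ k : ℕ in atTop, ¬ (p.1 + 1 ≼ c - k ∧ c - k ≼ p.2) := fun p _ =>
    (tendsto_natCast_atTop_atTop.eventually_gt_atTop (c.re - p.1.re)).mono fun k hk h => by
      have := re_le_of_natDiff h.1
      simp only [Complex.add_re, Complex.one_re, Complex.sub_re, Complex.natCast_re] at this
      linarith
  filter_upwards [(eventually_all_finset _).2 this] with k hk
  rw [crossing, countP_eq_zero]
  exact fun p hp => hk p (mem_toFinset.2 hp)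

lemma eventually_crossing_add_eq_zero (P : Multiset (ℂ × ℂ)) (c : ℂ) :
    ∀ᶠ k : ℕ in atTop, crossing P (c + k) = 0 := by
  classical
  have : ∀ p ∈ P.toFinset, ∀ᶠ k : ℕ in atTop, ¬ (p.1 + 1 ≼ c + k ∧ c + k ≼ p.2) := fun p _ =>
    (tendsto_natCast_atTop_atTop.eventually_gt_atTop (p.2.re - c.re)).mono fun k hk h => by
      have := re_le_of_natDiff h.2
      simp only [Complex.add_re, Complex.natCast_re] at this
      linarith
  filter_upwards [(eventually_all_finset _).2 this] with k hk
  rw [crossing, countP_eq_zero]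
  exact fun p hp => hk p (mem_toFinset.2 hp)

namespace IsStdFact

variable {e : RatFunc ℂ} {X W : Multiset ℂ} {P : Multiset (ℂ × ℂ)}

lemma add_one_natDiff (h : IsStdFact e X P W) {p : ℂ × ℂ} (hp : p ∈ P) :
    p.1 + 1 ≼ p.2 := by
  obtain ⟨n, hn0, hn⟩ := h.2.1 p hp
  obtain ⟨m, rfl⟩ := Nat.exists_eq_add_of_lt hn0
  exact ⟨m, by push_cast at hn; linear_combination hn⟩

lemma not_interlaced (h : IsStdFact e X P W) {p q : ℂ × ℂ} (hp : p ∈ P) (hq : q ∈ P) :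
    ¬ Interlaced p q := by
  rintro ⟨hpq, hqp, hpq'⟩
  refine h.2.2.1 p hp q hq ⟨?_, ?_⟩
  · rw [mem_DeltaSet_iff (natDiff_of_add_one_natDiff (h.add_one_natDiff hp))]
    exact ⟨(natDiff_congr (by ring)).1 hqp, (natDiff_congr (by ring)).1 hpq⟩
  · rw [mem_DeltaSet_iff (natDiff_of_add_one_natDiff (h.add_one_natDiff hq))]
    exact ⟨(natDiff_congr (by ring)).1 hqp, (natDiff_congr (by ring)).1 hpq'⟩

lemma crossing_eq_zero_of_mem_left (h : IsStdFact e X P W) {x : ℂ} (hx : x ∈ X) :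
    crossing P x = 0 := by
  classical
  rw [crossing, countP_eq_zero]
  rintro p hp ⟨hpx, hxp⟩
  refine h.2.2.2.1 x hx p hp ?_
  rw [mem_DeltaSet_iff (natDiff_of_add_one_natDiff (h.add_one_natDiff hp))]
  exact ⟨(natDiff_congr (by ring)).1 hxp, (natDiff_congr (by ring)).1 hpx⟩

lemma crossing_add_one_eq_zero_of_mem_right (h : IsStdFact e X P W) {w : ℂ}
    (hw : w ∈ W) : crossing P (w + 1) = 0 := by
  classical
  rw [crossing, countP_eq_zero]
  rintro p hp ⟨hpw, hwp⟩
  refine h.2.2.2.2.2 w hw p hp ?_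
  rw [mem_DeltaSet_iff (natDiff_of_add_one_natDiff (h.add_one_natDiff hp))]
  exact ⟨(natDiff_congr (by ring)).1 hpw, (natDiff_congr (by ring)).1 hwp⟩

lemma disjoint (h : IsStdFact e X P W) : Disjoint X W :=
  disjoint_left.2 fun hx hw => h.2.2.2.2.1 _ hx _ hw (natDiff_refl _)

lemma disjoint_map_fst_map_snd (h : IsStdFact e X P W) :
    Disjoint (P.map Prod.fst) (P.map Prod.snd) := by
  refine disjoint_left.2 fun hy hz => ?_
  obtain ⟨p, hp, rfl⟩ := mem_map.1 hy
  obtain ⟨q, hq, hqp⟩ := mem_map.1 hz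
  exact h.not_interlaced hq hp
    ⟨hqp ▸ h.add_one_natDiff hq, hqp ▸ natDiff_refl _, hqp ▸ h.add_one_natDiff hp⟩

variable {X' W' : Multiset ℂ} {Q : Multiset (ℂ × ℂ)}

lemma crossing_step (h : IsStdFact e X P W) (h' : IsStdFact e X' Q W') (t : ℂ) :
    crossing P (t + 1) + crossing Q t + X.count t + W'.count t =
      crossing Q (t + 1) + crossing P t + X'.count t + W.count t := by
  have hdiv := congrArg (count t) (stdProd_eq_stdProd_iff.1 (h.1.symm.trans h'.1))
  have hP := crossing_add_one_add_count_map_snd (fun _ => h.add_one_natDiff) t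
  have hQ := crossing_add_one_add_count_map_snd (fun _ => h'.add_one_natDiff) t
  simp only [count_add] at hdiv
  omega

lemma mem_left_of_crossing_lt (h : IsStdFact e X P W) (h' : IsStdFact e X' Q W') {t : ℂ}
    (h₀ : crossing P t ≤ crossing Q t) (h₁ : crossing Q (t + 1) < crossing P (t + 1)) :
    t ∈ X' := by
  have hW : W.count t = 0 := count_eq_zero.2 fun hw => by
    have := h.crossing_add_one_eq_zero_of_mem_right hw
    omega
  have := h.crossing_step h' t
  exact count_pos.1 (by omega)

lemma mem_right_of_crossing_lt (h : IsStdFact e X P W) (h' : IsStdFact e X' Q W') {t : ℂ}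
    (h₀ : crossing Q t < crossing P t) (h₁ : crossing P (t + 1) ≤ crossing Q (t + 1)) :
    t ∈ W' := by
  have hX : X.count t = 0 := count_eq_zero.2 fun hx => by
    have := h.crossing_eq_zero_of_mem_left hx
    omega
  have := h.crossing_step h' t
  exact count_pos.1 (by omega)

lemma crossing_le (h : IsStdFact e X P W) (h' : IsStdFact e X' Q W') (c : ℂ) :
    crossing P c ≤ crossing Q c := by
  by_contra! hc
  obtain ⟨K, ⟨hPK, hQK⟩, hPK', hQK'⟩ :=
    (((eventually_crossing_sub_eq_zero P c).and (eventually_crossing_sub_eq_zero Q c)).and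
      ((eventually_crossing_add_eq_zero P c).and (eventually_crossing_add_eq_zero Q c))).exists
  obtain ⟨k, hk, hk'⟩ := Nat.exists_lt_and_le_succ (f := fun k => crossing P (c - k))
    (g := fun k => crossing Q (c - k)) (by simpa using hc) (N := K) (by simp [hPK, hQK])
  obtain ⟨j, hj, hj'⟩ := Nat.exists_lt_and_le_succ (f := fun j => crossing P (c + j))
    (g := fun j => crossing Q (c + j)) (by simpa using hc) (N := K) (by simp [hPK', hQK'])
  have hx : c - (k + 1 : ℕ) ∈ X' := h.mem_left_of_crossing_lt h' hk'
    (by rwa [show c - (k + 1 : ℕ) + 1 = c - k by push_cast; ring])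
  have hw : c + j ∈ W' := h.mem_right_of_crossing_lt h' hj
    (by rwa [show c + j + 1 = c + (j + 1 : ℕ) by push_cast; ring])
  exact h'.2.2.2.2.1 _ hx _ hw ⟨k + 1 + j, by push_cast; ring⟩

lemma map_fst_add_map_snd_eq (h : IsStdFact e X P W) (h' : IsStdFact e X' Q W') :
    P.map Prod.fst + Q.map Prod.snd = Q.map Prod.fst + P.map Prod.snd := by
  refine ext.2 fun t => ?_
  have hP := crossing_add_one_add_count_map_snd (fun _ => h.add_one_natDiff) t
  have hQ := crossing_add_one_add_count_map_snd (fun _ => h'.add_one_natDiff) t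
  have h₀ := le_antisymm (h.crossing_le h' t) (h'.crossing_le h t)
  have h₁ := le_antisymm (h.crossing_le h' (t + 1)) (h'.crossing_le h (t + 1))
  simp only [count_add]
  omega

end IsStdFact

/-- Uniqueness of standard factorizations: the multisets `X`, `W` and the multiset
of pairs `P` in a standard factorization are completely determined by `e`. -/
theorem stdFact_unique (e : RatFunc ℂ)
    (X X' : Multiset ℂ) (P P' : Multiset (ℂ × ℂ)) (W W' : Multiset ℂ)
    (h : IsStdFact e X P W) (h' : IsStdFact e X' P' W') :
    X = X' ∧ P = P' ∧ W = W' := by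
  have hfs := h.map_fst_add_map_snd_eq h'
  have hXW : X + W' = X' + W := ext.2 fun t => by
    have hdiv := congrArg (count t) (stdProd_eq_stdProd_iff.1 (h.1.symm.trans h'.1))
    have := congrArg (count t) hfs
    simp only [count_add] at hdiv this ⊢
    omega
  obtain ⟨rfl, rfl⟩ := eq_and_eq_of_add_eq_add_of_disjoint hXW h.disjoint h'.disjoint
  obtain ⟨hf, hs⟩ := eq_and_eq_of_add_eq_add_of_disjoint hfs h.disjoint_map_fst_map_snd
    h'.disjoint_map_fst_map_snd
  exact ⟨rfl, eq_of_map_fst_eq_of_map_snd_eq (fun _ => h.add_one_natDiff)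
    (fun _ hp _ => h.not_interlaced hp) (fun _ => h'.add_one_natDiff)
    (fun _ hp _ => h'.not_interlaced hp) hf hs, rfl⟩
end

section
/- Let (a_p)_{p∈ℤ} be elements of A vanishing for all p below some bound, let A(u) := Σ_{p∈ℤ} a_p u^{-p-1} ∈ A((u^{-1})), let (x_n)_{n∈ℕ} be elements of A, and let γ ∈ ℂ. Assume [a_{p+1}, x_n] − [a_p, x_{n+1}] = γ·x_n·a_p for all p ∈ ℤ and n ∈ ℕ. Then for every n ∈ ℕ the identity A(u)·x_n = (x_n + γ·Σ_{k≥0} x_{n+k} u^{-k-1})·A(u) holds in A((u^{-1})); in particular, whenever A(u) is invertible, A(u)·x_n·A(u)^{-1} = x_n + γ·Σ_{k≥0} x_{n+k} u^{-k-1}. (This is the commutation of the GKLO truncation series A_i(u) with the Drinfeld generators x_{j,n}^−, with γ = d_i·δ_{ij}.) -/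
/-!
Write `t = u⁻¹` and `X_n = Σ_k x_{n+k} t^k`, so that `X_n = x_n + t X_{n+1}`. In series form the
hypothesis reads `⁅F, x_n⁆ - t ⁅F, x_{n+1}⁆ = γ t x_n F`, hence the defects
`D_n = ⁅F, x_n⁆ - γ t X_n F` satisfy `D_n = t D_{n+1}`. Every `D_n` vanishes below the order of `F`,
so `D_n = t^k D_{n+k}` vanishes below `order F + k` for every `k`, i.e. `D_n = 0`.
-/

namespace HahnSeries

section Ring

variable {R : Type*} [Ring R]

theorem coeff_lie_C (x : R⟦ℤ⟧) (r : R) (a : ℤ) :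
    (⁅x, C r⁆ : R⟦ℤ⟧).coeff a = ⁅x.coeff a, r⁆ := by
  rw [Ring.lie_def, Ring.lie_def, coeff_sub, C_apply, coeff_mul_single_zero, coeff_single_zero_mul]

theorem orderTop_le_orderTop_lie_C (x : R⟦ℤ⟧) (r : R) :
    x.orderTop ≤ (⁅x, C r⁆ : R⟦ℤ⟧).orderTop :=
  le_orderTop_iff_forall.mpr fun j hj => by
    rw [coeff_lie_C, coeff_eq_zero_of_lt_orderTop hj, Ring.lie_def, zero_mul, mul_zero, sub_zero]

end Ring

section Semiring

variable {R : Type*} [Semiring R]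

theorem zero_le_orderTop_ofPowerSeries (p : PowerSeries R) :
    0 ≤ (ofPowerSeries ℤ R p).orderTop := by
  rw [ofPowerSeries_apply, orderTop_embDomain]
  cases (toPowerSeries.symm p).orderTop <;> simp

theorem ofPowerSeries_mk (g : ℕ → R) :
    ofPowerSeries ℤ R (PowerSeries.mk g) =
      C (g 0) + single 1 1 * ofPowerSeries ℤ R (PowerSeries.mk fun k => g (k + 1)) := by
  conv_lhs => rw [PowerSeries.eq_X_mul_shift_add_const (PowerSeries.mk g)]
  simp [ofPowerSeries_X, ofPowerSeries_C, add_comm]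

theorem eq_zero_of_eq_single_one_mul_succ {D : ℕ → R⟦ℤ⟧} (b : ℤ)
    (hb : ∀ n, (b : WithTop ℤ) ≤ (D n).orderTop) (hD : ∀ n, D n = single 1 1 * D (n + 1))
    (n : ℕ) : D n = 0 := by
  have hvanish : ∀ (k n : ℕ) (j : ℤ), j < b + k → (D n).coeff j = 0 := by
    intro k
    induction k with
    | zero =>
      exact fun n j hj =>
        coeff_eq_zero_of_lt_orderTop ((WithTop.coe_lt_coe.mpr (by simpa using hj)).trans_le (hb n))
    | succ k ih =>
      intro n j hj
      rw [hD n, coeff_single_mul, one_mul]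
      exact ih (n + 1) (j - 1) (by push_cast at hj; omega)
  ext j
  exact hvanish (j - b + 1).toNat n j (by omega)

end Semiring

section Commutation

variable {K R : Type*} [CommSemiring K] [Ring R] [Algebra K R]

/-- `Σ_{k≥0} x_{n+k} u^{-k-1}`, in the variable `u⁻¹`. -/
noncomputable def tailSeries (x : ℕ → R) (n : ℕ) : R⟦ℤ⟧ :=
  single 1 1 * ofPowerSeries ℤ R (PowerSeries.mk fun k => x (n + k))

theorem tailSeries_eq (x : ℕ → R) (n : ℕ) :
    tailSeries x n = single 1 1 * (C (x n) + tailSeries x (n + 1)) := by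
  rw [tailSeries, ofPowerSeries_mk, Nat.add_zero, tailSeries]
  simp only [Nat.add_assoc, Nat.add_comm 1]

theorem zero_le_orderTop_tailSeries (x : ℕ → R) (n : ℕ) : 0 ≤ (tailSeries x n).orderTop :=
  calc (0 : WithTop ℤ) ≤ 1 + 0 := by norm_num
    _ ≤ (single (1 : ℤ) (1 : R)).orderTop + (ofPowerSeries ℤ R _).orderTop :=
      add_le_add orderTop_single_le (zero_le_orderTop_ofPowerSeries _)
    _ ≤ _ := orderTop_add_le_mul

variable {F : R⟦ℤ⟧} {x : ℕ → R} {γ : K}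

theorem lie_C_sub_single_one_mul_lie_C
    (hcomm : ∀ (m : ℤ) (n : ℕ),
      ⁅F.coeff (m + 1), x n⁆ - ⁅F.coeff m, x (n + 1)⁆ = γ • (x n * F.coeff m))
    (n : ℕ) :
    ⁅F, C (x n)⁆ - single 1 1 * ⁅F, C (x (n + 1))⁆ = γ • (single 1 1 * C (x n) * F) := by
  ext m
  have h := hcomm (m - 1) n
  rw [sub_add_cancel] at h
  rw [coeff_sub, coeff_smul, mul_assoc, coeff_single_mul, coeff_single_mul, one_mul, one_mul,
    coeff_lie_C, coeff_lie_C, C_apply, coeff_single_zero_mul, h]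

theorem lie_C_eq_smul_tailSeries_mul
    (hcomm : ∀ (m : ℤ) (n : ℕ),
      ⁅F.coeff (m + 1), x n⁆ - ⁅F.coeff m, x (n + 1)⁆ = γ • (x n * F.coeff m))
    (n : ℕ) : ⁅F, C (x n)⁆ = γ • (tailSeries x n * F) := by
  set D : ℕ → R⟦ℤ⟧ := fun n => ⁅F, C (x n)⁆ - γ • (tailSeries x n * F)
  have hshift : ∀ n, D n = single 1 1 * D (n + 1) := by
    intro n
    simp only [D]
    rw [tailSeries_eq, eq_add_of_sub_eq (lie_C_sub_single_one_mul_lie_C hcomm n)]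
    simp only [mul_add, add_mul, mul_sub, smul_add, mul_smul_comm, mul_assoc]
    abel
  have hbound : ∀ n, (F.order : WithTop ℤ) ≤ (D n).orderTop := by
    intro n
    have hF : (F.order : WithTop ℤ) ≤ F.orderTop :=
      le_orderTop_iff_forall.mpr fun j hj => coeff_eq_zero_of_lt_order (by exact_mod_cast hj)
    have hT : F.orderTop ≤ (tailSeries x n * F).orderTop :=
      (le_add_of_nonneg_left (zero_le_orderTop_tailSeries x n)).trans orderTop_add_le_mul
    exact hF.trans <| (le_min (orderTop_le_orderTop_lie_C F (x n))
      (hT.trans (orderTop_le_orderTop_smul γ _))).trans min_orderTop_le_orderTop_sub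
  exact sub_eq_zero.mp (eq_zero_of_eq_single_one_mul_succ F.order hbound hshift n)

end Commutation

end HahnSeries

theorem GKLO_commutation_general {A : Type*} [Ring A] [Algebra ℂ A]
    (F : HahnSeries ℤ A)
    (x : ℕ → A) (γ : ℂ)
    (hcomm : ∀ (p : ℤ) (n : ℕ),
      (F.coeff (p + 1 + 1) * x n - x n * F.coeff (p + 1 + 1)) -
        (F.coeff (p + 1) * x (n + 1) - x (n + 1) * F.coeff (p + 1)) =
      γ • (x n * F.coeff (p + 1))) :
    ∀ n : ℕ,
      F * HahnSeries.C (x n) =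
        (HahnSeries.C (x n) +
          γ • (HahnSeries.single (1 : ℤ) (1 : A) *
            HahnSeries.ofPowerSeries ℤ A (PowerSeries.mk fun k => x (n + k)))) * F ∧
      ∀ hF : IsUnit F,
        F * HahnSeries.C (x n) * (hF.unit⁻¹ : (HahnSeries ℤ A)ˣ).val =
          HahnSeries.C (x n) +
            γ • (HahnSeries.single (1 : ℤ) (1 : A) *
              HahnSeries.ofPowerSeries ℤ A (PowerSeries.mk fun k => x (n + k))) := by
  have hlie : ∀ (m : ℤ) (n : ℕ),
      ⁅F.coeff (m + 1), x n⁆ - ⁅F.coeff m, x (n + 1)⁆ = γ • (x n * F.coeff m) := fun m n => by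
    simpa [Ring.lie_def] using hcomm (m - 1) n
  intro n
  have hmul : F * HahnSeries.C (x n) =
      (HahnSeries.C (x n) + γ • HahnSeries.tailSeries x n) * F := by
    rw [add_mul, smul_mul_assoc, ← HahnSeries.lie_C_eq_smul_tailSeries_mul hlie n, Ring.lie_def]
    abel
  exact ⟨hmul, fun hF => by rw [hmul, mul_assoc, hF.mul_val_inv, mul_one]; rfl⟩

/-- Commutation of a truncation (GKLO-type) series with Drinfeld-type generators.

Let `A` be an associative unital `ℂ`-algebra. We encode `A((u^{-1}))` as
`HahnSeries ℤ A` in the variable `t = u^{-1}`, so that a series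
`A(u) = Σ_{p∈ℤ} a_p u^{-p-1}` corresponds to the Hahn series `F` with
`F.coeff (p+1) = a_p`, `A` embeds as constant series via `HahnSeries.C`, and
`Σ_{k≥0} x_{n+k} u^{-k-1}` corresponds to
`single 1 1 * ofPowerSeries ℤ A (PowerSeries.mk fun k => x (n+k))`.

If `[a_{p+1}, x_n] − [a_p, x_{n+1}] = γ·x_n·a_p` for all `p ∈ ℤ`, `n ∈ ℕ`, then
`A(u)·x_n = (x_n + γ·Σ_{k≥0} x_{n+k} u^{-k-1})·A(u)`, and consequently, whenever
`A(u)` is invertible, `A(u)·x_n·A(u)^{-1} = x_n + γ·Σ_{k≥0} x_{n+k} u^{-k-1}`. -/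
theorem GKLO_commutation {A : Type*} [Ring A] [Algebra ℂ A]
    (F : HahnSeries ℤ A) (N : ℤ) (hbd : ∀ p : ℤ, p < N → F.coeff (p + 1) = 0)
    (x : ℕ → A) (γ : ℂ)
    (hcomm : ∀ (p : ℤ) (n : ℕ),
      (F.coeff (p + 1 + 1) * x n - x n * F.coeff (p + 1 + 1)) -
        (F.coeff (p + 1) * x (n + 1) - x (n + 1) * F.coeff (p + 1)) =
      γ • (x n * F.coeff (p + 1))) :
    ∀ n : ℕ,
      F * HahnSeries.C (x n) =
        (HahnSeries.C (x n) +
          γ • (HahnSeries.single (1 : ℤ) (1 : A) *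
            HahnSeries.ofPowerSeries ℤ A (PowerSeries.mk fun k => x (n + k)))) * F ∧
      ∀ hF : IsUnit F,
        F * HahnSeries.C (x n) * (hF.unit⁻¹ : (HahnSeries ℤ A)ˣ).val =
          HahnSeries.C (x n) +
            γ • (HahnSeries.single (1 : ℤ) (1 : A) *
              HahnSeries.ofPowerSeries ℤ A (PowerSeries.mk fun k => x (n + k))) :=
  GKLO_commutation_general F x γ hcomm
end
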